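/- arXiv:2205.00791 — 6 statements merged into one kernel-verified Lean document; each statement's English description precedes it below -/
import Mathlib

section
/- Shapiro's theorem (relation case, one direction): if R ⊆ ℕ is a set that is neither finite nor cofinite, then there exists a bijection σ : ℕ → ℕ such that the σ-preimage of R, namely {n : σ(n) ∈ R}, is not computable. -/
/-!
A noncomputable set, such as the halting set, is infinite and coinfinite. Any two infinite,
coinfinite subsets of ℕ are carried onto each other by a bijection of ℕ (match the sets with each
other and the complements with each other), so some bijection pulls `R` back to the halting set.
-/

open Nat.Partrec

theorem Set.Finite.computablePred {α : Type*} [Primcodable α] [DecidableEq α] {s : Set α}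
    (hs : s.Finite) : ComputablePred (· ∈ s) := by
  obtain ⟨F, rfl⟩ := hs.exists_finset_coe
  have hF : PrimrecPred fun a => ∃ b ∈ F.toList, b = a :=
    (PrimrecRel.exists_mem_list Primrec.eq).comp (.const F.toList) .id
  exact hF.computablePred.of_eq fun a => by simp

theorem Set.infinite_of_not_computablePred {α : Type*} [Primcodable α] [DecidableEq α]
    {s : Set α} (hs : ¬ComputablePred (· ∈ s)) : s.Infinite :=
  fun hfin => hs hfin.computablePred

theorem Set.infinite_compl_of_not_computablePred {α : Type*} [Primcodable α] [DecidableEq α]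
    {s : Set α} (hs : ¬ComputablePred (· ∈ s)) : sᶜ.Infinite :=
  fun hfin => hs (hfin.computablePred.not.of_eq fun _ => not_not)

theorem exists_equiv_mem_iff_mem {α β : Type*} [Countable α] [Countable β]
    {s : Set α} {t : Set β} (hs : s.Infinite) (hsc : sᶜ.Infinite)
    (ht : t.Infinite) (htc : tᶜ.Infinite) : ∃ e : α ≃ β, ∀ a, e a ∈ t ↔ a ∈ s := by
  classical
  have := hs.to_subtype; have := hsc.to_subtype; have := ht.to_subtype; have := htc.to_subtype
  obtain ⟨e₁⟩ : Nonempty (s ≃ t) := nonempty_equiv_of_countable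
  obtain ⟨e₂⟩ : Nonempty (↥sᶜ ≃ ↥tᶜ) := nonempty_equiv_of_countable
  refine ⟨(Equiv.Set.sumCompl s).symm.trans ((e₁.sumCongr e₂).trans (Equiv.Set.sumCompl t)),
    fun a => ?_⟩
  by_cases ha : a ∈ s
  · simp only [Equiv.trans_apply, Equiv.Set.sumCompl_symm_apply_of_mem ha, Equiv.sumCongr_apply,
      Sum.map_inl, Equiv.Set.sumCompl_apply_inl]
    exact iff_of_true (e₁ _).2 ha
  · simp only [Equiv.trans_apply, Equiv.Set.sumCompl_symm_apply_of_notMem ha,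
      Equiv.sumCongr_apply, Sum.map_inr, Equiv.Set.sumCompl_apply_inr]
    exact iff_of_false (e₂ _).2 ha

def haltingSet : Set ℕ := {n | (Code.eval (Denumerable.ofNat Code n) 0).Dom}

theorem not_computablePred_mem_haltingSet : ¬ComputablePred (· ∈ haltingSet) := fun h =>
  ComputablePred.halting_problem 0 <| ComputablePred.computable_of_manyOneReducible
    (ManyOneReducible.mk _ Computable.encode) h |>.of_eq fun c => by
      simp [haltingSet, Denumerable.ofNat_encode]

/-- Shapiro's theorem, relation case, one direction: if `R ⊆ ℕ` is neither finite
nor cofinite, then there is a bijection (notation) `σ : ℕ → ℕ` in which `R` is not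
computable, i.e. the `σ`-preimage of `R` is not a computable set. -/
theorem stmt_9 (R : Set ℕ) (h1 : ¬ R.Finite) (h2 : ¬ Rᶜ.Finite) :
    ∃ σ : ℕ → ℕ, Function.Bijective σ ∧ ¬ ComputablePred fun n : ℕ => σ n ∈ R := by
  obtain ⟨σ, hσ⟩ := exists_equiv_mem_iff_mem
    (Set.infinite_of_not_computablePred not_computablePred_mem_haltingSet)
    (Set.infinite_compl_of_not_computablePred not_computablePred_mem_haltingSet) h1 h2
  exact ⟨σ, σ.bijective, fun hR => not_computablePred_mem_haltingSet (hR.of_eq hσ)⟩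
end

section
/- Shapiro's theorem (function case, hard direction): if f : ℕ → ℕ is neither almost constant nor almost identity, then there exists a bijection σ : ℕ → ℕ such that σ⁻¹ ∘ f ∘ σ is not computable. -/
namespace Shapiro12

open scoped Classical

/-- The two hypotheses bundled. -/
def Good (f : ℕ → ℕ) : Prop :=
  {x | f x ≠ x}.Infinite ∧ ∀ c : ℕ, {x | f x ≠ c}.Infinite

noncomputable def pickP (f : ℕ → ℕ) (F : Finset ℕ) : ℕ :=
  if h : Good f then (h.1.exists_notMem_finset F).choose else 0

noncomputable def pickQ (f : ℕ → ℕ) (F : Finset ℕ) : ℕ :=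
  if h : Good f then
    ((h.2 (f (pickP f F))).exists_notMem_finset
      (F ∪ {pickP f F, f (pickP f F)})).choose
  else 0

theorem pickP_spec {f : ℕ → ℕ} (h : Good f) (F : Finset ℕ) :
    f (pickP f F) ≠ pickP f F ∧ pickP f F ∉ F := by
  rw [pickP, dif_pos h]
  obtain ⟨hs, ht⟩ := (h.1.exists_notMem_finset F).choose_spec
  exact ⟨hs, ht⟩

theorem pickQ_spec {f : ℕ → ℕ} (h : Good f) (F : Finset ℕ) :
    f (pickQ f F) ≠ f (pickP f F) ∧ pickQ f F ∉ F ∧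
      pickQ f F ≠ pickP f F ∧ pickQ f F ≠ f (pickP f F) := by
  rw [pickQ, dif_pos h]
  obtain ⟨hs, ht⟩ := ((h.2 (f (pickP f F))).exists_notMem_finset
      (F ∪ {pickP f F, f (pickP f F)})).choose_spec
  exact ⟨hs, fun hF => ht (Finset.mem_union_left _ hF),
    fun he => ht (Finset.mem_union_right _ (by rw [he]; exact Finset.mem_insert_self _ _)),
    fun he => ht (Finset.mem_union_right _ (by rw [he]; simp))⟩

noncomputable def Fs (f : ℕ → ℕ) : ℕ → Finset ℕ
  | 0 => ∅
  | n + 1 => Fs f n ∪ {pickP f (Fs f n), pickQ f (Fs f n),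
      f (pickP f (Fs f n)), f (pickQ f (Fs f n))}

noncomputable def pp (f : ℕ → ℕ) (n : ℕ) : ℕ := pickP f (Fs f n)
noncomputable def qq (f : ℕ → ℕ) (n : ℕ) : ℕ := pickQ f (Fs f n)

theorem mem_Fs_succ (f : ℕ → ℕ) (n : ℕ) :
    pp f n ∈ Fs f (n+1) ∧ qq f n ∈ Fs f (n+1) ∧
      f (pp f n) ∈ Fs f (n+1) ∧ f (qq f n) ∈ Fs f (n+1) := by
  simp [Fs, pp, qq]

theorem Fs_mono (f : ℕ → ℕ) : Monotone (Fs f) := by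
  apply monotone_nat_of_le_succ
  intro n
  show Fs f n ⊆ Fs f (n+1)
  simp only [Fs]
  exact Finset.subset_union_left

variable {f : ℕ → ℕ}

theorem pp_not_mem (h : Good f) (n : ℕ) : pp f n ∉ Fs f n := (pickP_spec h _).2
theorem qq_notMem (h : Good f) (n : ℕ) : qq f n ∉ Fs f n := (pickQ_spec h _).2.1
theorem f_pp_ne_pp (h : Good f) (n : ℕ) : f (pp f n) ≠ pp f n := (pickP_spec h _).1
theorem qq_ne_pp (h : Good f) (n : ℕ) : qq f n ≠ pp f n := (pickQ_spec h _).2.2.1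
theorem qq_ne_f_pp (h : Good f) (n : ℕ) : qq f n ≠ f (pp f n) := (pickQ_spec h _).2.2.2
theorem f_qq_ne_f_pp (h : Good f) (n : ℕ) : f (qq f n) ≠ f (pp f n) := (pickQ_spec h _).1

/-- Elements picked at stage `j` lie in `Fs f i` for `j < i`. -/
theorem mem_Fs_of_lt (h : Good f) {j i : ℕ} (hji : j < i) :
    pp f j ∈ Fs f i ∧ qq f j ∈ Fs f i ∧ f (pp f j) ∈ Fs f i ∧ f (qq f j) ∈ Fs f i := by
  have hm := Fs_mono f (Nat.succ_le_of_lt hji)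
  obtain ⟨a, b, c, d⟩ := mem_Fs_succ f j
  exact ⟨hm a, hm b, hm c, hm d⟩

theorem pp_ne_qq (h : Good f) (i j : ℕ) : pp f i ≠ qq f j := by
  rcases lt_trichotomy i j with hij | rfl | hij
  · intro he; exact qq_notMem h j (he ▸ (mem_Fs_of_lt h hij).1)
  · exact (qq_ne_pp h i).symm
  · intro he; exact pp_not_mem h i (he.symm ▸ (mem_Fs_of_lt h hij).2.1)

theorem pp_inj (h : Good f) {i j : ℕ} (he : pp f i = pp f j) : i = j := by
  by_contra hne
  rcases lt_or_gt_of_ne hne with hij | hij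
  · exact pp_not_mem h j (he ▸ (mem_Fs_of_lt h hij).1)
  · exact pp_not_mem h i (he.symm ▸ (mem_Fs_of_lt h hij).1)

theorem qq_inj (h : Good f) {i j : ℕ} (he : qq f i = qq f j) : i = j := by
  by_contra hne
  rcases lt_or_gt_of_ne hne with hij | hij
  · exact qq_notMem h j (he ▸ (mem_Fs_of_lt h hij).2.1)
  · exact qq_notMem h i (he.symm ▸ (mem_Fs_of_lt h hij).2.1)

/-- `f (pp f i)` avoids all pairs with index `≥ i`. -/
theorem f_pp_ne_ge (h : Good f) {i j : ℕ} (hij : i ≤ j) :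
    f (pp f i) ≠ pp f j ∧ f (pp f i) ≠ qq f j := by
  rcases eq_or_lt_of_le hij with rfl | hij
  · exact ⟨f_pp_ne_pp h i, fun he => qq_ne_f_pp h i he.symm⟩
  · constructor
    · intro he; exact pp_not_mem h j (he ▸ (mem_Fs_of_lt h hij).2.2.1)
    · intro he; exact qq_notMem h j (he ▸ (mem_Fs_of_lt h hij).2.2.1)

/-- The involution swapping `pp f i ↔ qq f i` for `i ∈ S`. -/
noncomputable def tau (f : ℕ → ℕ) (S : Set ℕ) (x : ℕ) : ℕ :=
  if h : ∃ i, i ∈ S ∧ x = pp f i then qq f h.choose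
  else if h : ∃ i, i ∈ S ∧ x = qq f i then pp f h.choose
  else x

theorem tau_pp (h : Good f) {S : Set ℕ} {i : ℕ} (hi : i ∈ S) :
    tau f S (pp f i) = qq f i := by
  have hex : ∃ j, j ∈ S ∧ pp f i = pp f j := ⟨i, hi, rfl⟩
  rw [tau, dif_pos hex]
  exact congrArg (qq f) (pp_inj h hex.choose_spec.2).symm

theorem tau_qq (h : Good f) {S : Set ℕ} {i : ℕ} (hi : i ∈ S) :
    tau f S (qq f i) = pp f i := by
  have hnex : ¬ ∃ j, j ∈ S ∧ qq f i = pp f j := by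
    rintro ⟨j, -, he⟩; exact pp_ne_qq h j i he.symm
  have hex : ∃ j, j ∈ S ∧ qq f i = qq f j := ⟨i, hi, rfl⟩
  rw [tau, dif_neg hnex, dif_pos hex]
  exact congrArg (pp f) (qq_inj h hex.choose_spec.2).symm

theorem tau_fix {S : Set ℕ} {x : ℕ} (hx : ∀ i ∈ S, x ≠ pp f i ∧ x ≠ qq f i) :
    tau f S x = x := by
  rw [tau, dif_neg (by rintro ⟨j, hj, he⟩; exact (hx j hj).1 he),
    dif_neg (by rintro ⟨j, hj, he⟩; exact (hx j hj).2 he)]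

theorem tau_tau (h : Good f) (S : Set ℕ) (x : ℕ) : tau f S (tau f S x) = x := by
  by_cases h1 : ∃ i, i ∈ S ∧ x = pp f i
  · obtain ⟨i, hi, rfl⟩ := h1; rw [tau_pp h hi, tau_qq h hi]
  · by_cases hq : ∃ i, i ∈ S ∧ x = qq f i
    · obtain ⟨i, hi, rfl⟩ := hq; rw [tau_qq h hi, tau_pp h hi]
    · push_neg at h1 hq
      have hx : ∀ i ∈ S, x ≠ pp f i ∧ x ≠ qq f i := fun i hi => ⟨h1 i hi, hq i hi⟩
      rw [tau_fix hx, tau_fix hx]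

theorem tau_involutive (h : Good f) (S : Set ℕ) : Function.Involutive (tau f S) :=
  tau_tau h S

theorem tau_bijective (h : Good f) (S : Set ℕ) : Function.Bijective (tau f S) :=
  (tau_involutive h S).bijective

theorem invFun_tau (h : Good f) (S : Set ℕ) :
    Function.invFun (tau f S) = tau f S := by
  funext y
  have h1 : tau f S (Function.invFun (tau f S) y) = y :=
    Function.invFun_eq ⟨tau f S y, tau_tau h S y⟩
  exact (tau_involutive h S).injective (h1.trans (tau_tau h S y).symm)

/-- If `S` and `S'` agree below `i` and `v` avoids all pairs of index `≥ i`,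
then `tau f S v = tau f S' v`. -/
theorem tau_eq_of_agree (h : Good f) {S S' : Set ℕ} {i : ℕ}
    (hag : ∀ j, j < i → (j ∈ S ↔ j ∈ S')) {v : ℕ}
    (hv : ∀ j, i ≤ j → v ≠ pp f j ∧ v ≠ qq f j) :
    tau f S v = tau f S' v := by
  rcases em (∃ j, v = pp f j) with ⟨j, rfl⟩ | hp
  · have hji : j < i := lt_of_not_ge fun hle => (hv j hle).1 rfl
    by_cases hjS : j ∈ S
    · rw [tau_pp h hjS, tau_pp h ((hag j hji).1 hjS)]
    · have hjS' : j ∉ S' := fun hh => hjS ((hag j hji).2 hh)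
      have fixT : ∀ (T : Set ℕ), j ∉ T → tau f T (pp f j) = pp f j := fun T hT =>
        tau_fix (fun k hk => ⟨fun he => hT (by rwa [pp_inj h he]), pp_ne_qq h j k⟩)
      rw [fixT S hjS, fixT S' hjS']
  · rcases em (∃ j, v = qq f j) with ⟨j, rfl⟩ | hq
    · have hji : j < i := lt_of_not_ge fun hle => (hv j hle).2 rfl
      by_cases hjS : j ∈ S
      · rw [tau_qq h hjS, tau_qq h ((hag j hji).1 hjS)]
      · have hjS' : j ∉ S' := fun hh => hjS ((hag j hji).2 hh)
        have fixT : ∀ (T : Set ℕ), j ∉ T → tau f T (qq f j) = qq f j := fun T hT =>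
          tau_fix (fun k hk =>
            ⟨fun he => pp_ne_qq h k j he.symm, fun he => hT (by rwa [qq_inj h he])⟩)
        rw [fixT S hjS, fixT S' hjS']
    · push_neg at hp hq
      have hx : ∀ (T : Set ℕ), tau f T v = v := fun T =>
        tau_fix (fun k _ => ⟨hp k, hq k⟩)
      rw [hx S, hx S']

noncomputable def conj (f : ℕ → ℕ) (S : Set ℕ) : ℕ → ℕ :=
  tau f S ∘ f ∘ tau f S

theorem conj_apply_ne (h : Good f) {S S' : Set ℕ} {i : ℕ}
    (hag : ∀ j, j < i → (j ∈ S ↔ j ∈ S')) (hiS : i ∈ S) (hiS' : i ∉ S') :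
    conj f S (qq f i) ≠ conj f S' (qq f i) := by
  have hfix : tau f S' (qq f i) = qq f i :=
    tau_fix (fun k hk =>
      ⟨fun he => pp_ne_qq h k i he.symm,
       fun he => hiS' (qq_inj h he ▸ hk)⟩)
  show tau f S (f (tau f S (qq f i))) ≠ tau f S' (f (tau f S' (qq f i)))
  rw [tau_qq h hiS, hfix]
  rw [tau_eq_of_agree h hag (fun j hj => f_pp_ne_ge h hj)]
  intro he
  exact f_qq_ne_f_pp h i ((tau_involutive h S').injective he).symm

theorem conj_inj (h : Good f) : Function.Injective (conj f) := by
  intro S S' he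
  by_contra hne
  have hdiff : ∃ i, ¬(i ∈ S ↔ i ∈ S') := by
    by_contra hd
    push_neg at hd
    exact hne (Set.ext fun i => hd i)
  have hi := Nat.find_spec hdiff
  have hag : ∀ j, j < Nat.find hdiff → (j ∈ S ↔ j ∈ S') := fun j hj =>
    of_not_not (Nat.find_min hdiff hj)
  rcases em (Nat.find hdiff ∈ S) with hiS | hiS
  · have hiS' : Nat.find hdiff ∉ S' := fun hh => hi ⟨fun _ => hh, fun _ => hiS⟩
    exact conj_apply_ne h hag hiS hiS' (congrFun he (qq f (Nat.find hdiff)))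
  · have hiS' : Nat.find hdiff ∈ S' := by
      by_contra hh
      exact hi ⟨fun hx => absurd hx hiS, fun hx => absurd hx hh⟩
    exact conj_apply_ne h (fun j hj => (hag j hj).symm) hiS' hiS
      (congrFun he.symm (qq f (Nat.find hdiff)))

theorem countable_computable : {g : ℕ → ℕ | Computable g}.Countable := by
  have key : ∀ g : {g : ℕ → ℕ | Computable g}, ∃ c : Nat.Partrec.Code,
      c.eval = fun n => Part.some (g.1 n) := by
    rintro ⟨g, hg⟩
    have h1 : Nat.Partrec (fun n => Part.some (g n)) := by
      have := Partrec.nat_iff.mp hg.partrec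
      exact this.of_eq fun n => by simp [Part.coe_some]
    exact Nat.Partrec.Code.exists_code.mp h1
  choose F hF using key
  have hFinj : Function.Injective F := by
    intro g1 g2 he
    have : (fun n => Part.some (g1.1 n)) = fun n => Part.some (g2.1 n) := by
      rw [← hF g1, ← hF g2, he]
    ext n
    have := congrFun this n
    simpa using this
  have : Countable {g : ℕ → ℕ | Computable g} := hFinj.countable
  exact Set.countable_coe_iff.mp this

end Shapiro12

/-- Shapiro's theorem, function case, hard direction: if `f : ℕ → ℕ` is neither
almost constant nor almost identity, then there is a bijection (notation) `σ`
in which `f` is not computable, i.e. `σ⁻¹ ∘ f ∘ σ` is not computable. -/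
theorem stmt_12 (f : ℕ → ℕ)
    (h1 : ¬ ∃ c : ℕ, {x : ℕ | f x ≠ c}.Finite)
    (h2 : ¬ {x : ℕ | f x ≠ x}.Finite) :
    ∃ σ : ℕ → ℕ, Function.Bijective σ ∧ ¬ Computable (Function.invFun σ ∘ f ∘ σ) := by
  classical
  push_neg at h1
  have h : Shapiro12.Good f := ⟨h2, fun c => h1 c⟩
  by_contra hcon
  push_neg at hcon
  have hcomp : ∀ S : Set ℕ, Computable (Shapiro12.conj f S) := by
    intro S
    have := hcon (Shapiro12.tau f S) (Shapiro12.tau_bijective h S)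
    rwa [Shapiro12.invFun_tau h S] at this
  obtain ⟨e, he⟩ := Set.countable_iff_exists_injective.mp Shapiro12.countable_computable
  have hinj : Function.Injective (fun S : Set ℕ => e ⟨Shapiro12.conj f S, hcomp S⟩) := by
    intro S S' hSS'
    exact Shapiro12.conj_inj h (congrArg Subtype.val (he hSS'))
  exact Function.cantor_injective _ hinj
end

section
/- A function f : ℕ → ℕ that is neither almost constant nor almost identity gives rise to an automorphically nontrivial structure: for every finite X ⊆ ℕ there is a permutation π of ℕ fixing X pointwise that is not an automorphism of (ℕ, f), i.e., π ∘ f ≠ f ∘ π. -/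
/-- A function `f : ℕ → ℕ` that is neither almost constant nor almost identity gives
rise to an automorphically nontrivial structure `(ℕ, f)`: for every finite `X ⊆ ℕ`
there is a permutation of `ℕ` fixing `X` pointwise that does not commute with `f`. -/
theorem stmt_13 (f : ℕ → ℕ)
    (h1 : ¬ ∃ c : ℕ, {x : ℕ | f x ≠ c}.Finite)
    (h2 : ¬ {x : ℕ | f x ≠ x}.Finite) :
    ∀ X : Finset ℕ, ∃ π : Equiv.Perm ℕ, (∀ x ∈ X, π x = x) ∧ ⇑π ∘ f ≠ f ∘ ⇑π := by
  intro X
  have hinf2 : {x : ℕ | f x ≠ x}.Infinite := h2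
  obtain ⟨a, ha, haX⟩ := hinf2.exists_notMem_finset X
  have hinf1 : {x : ℕ | f x ≠ f a}.Infinite := fun hfin => h1 ⟨f a, hfin⟩
  obtain ⟨b, hb, hbX⟩ := hinf1.exists_notMem_finset (X ∪ {a, f a})
  simp only [Finset.mem_union, Finset.mem_insert, Finset.mem_singleton, not_or] at hbX
  obtain ⟨hbX', hba, hbfa⟩ := hbX
  refine ⟨Equiv.swap a b, ?_, ?_⟩
  · intro x hx
    apply Equiv.swap_apply_of_ne_of_ne
    · rintro rfl; exact haX hx
    · rintro rfl; exact hbX' hx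
  · intro h
    have := congrFun h a
    simp only [Function.comp_apply] at this
    rw [Equiv.swap_apply_of_ne_of_ne ha (fun h' => hbfa h'.symm)] at this
    rw [Equiv.swap_apply_left] at this
    exact hb this.symm
end

section
/- Mal'tsev's computable categoricity of the successor structure: if g : ℕ → ℕ is a computable function such that (ℕ, g) is isomorphic to (ℕ, Succ) (where Succ(n) = n+1), then the unique isomorphism from (ℕ, g) to (ℕ, Succ) is computable. -/
/-! If `x₀` is the point with `h x₀ = 0`, then `h` is inverse to the computable orbit map
`n ↦ g^[n] x₀`, so `h x` is found by unbounded search for the `n` with `g^[n] x₀ = x`. -/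

open Function

namespace Computable

variable {α β : Type*} [Primcodable α] [Primcodable β]

theorem nat_iterate {f : α → ℕ} {x : α → β} {g : α → β → β} (hf : Computable f)
    (hx : Computable x) (hg : Computable₂ g) : Computable fun a => (g a)^[f a] (x a) :=
  (nat_rec hf hx (hg.comp fst (snd.comp snd)).to₂).of_eq fun a => by
    induction f a <;> simp [*, -iterate_succ, iterate_succ']

theorem of_rightInverse_of_injective [DecidableEq α] {e : ℕ → α} {h : α → ℕ}
    (he : Computable e) (he_inj : Injective e) (h_inv : RightInverse h e) : Computable h := by
  have hsearch : Computable₂ fun x n => decide (e n = x) :=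
    (Primrec.eq.decide.to_comp.comp (he.comp snd) fst).to₂
  refine (Partrec.rfind hsearch.partrec₂).of_eq_tot fun x => Nat.mem_rfind.2 ⟨?_, fun hm => ?_⟩
  · simpa using h_inv x
  · simpa using fun hmx => hm.ne (he_inj (hmx.trans (h_inv x).symm))

end Computable

/-- Mal'tsev's computable categoricity of `(ℕ, Succ)`: if `g : ℕ → ℕ` is computable
and `h` is an isomorphism from `(ℕ, g)` onto `(ℕ, Succ)` (a bijection with
`h (g x) = h x + 1`), then `h` is computable. -/
theorem stmt_14 (g : ℕ → ℕ) (hg : Computable g)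
    (h : ℕ → ℕ) (hbij : Function.Bijective h)
    (hcomm : ∀ x : ℕ, h (g x) = h x + 1) :
    Computable h := by
  obtain ⟨x₀, hx₀⟩ := hbij.surjective 0
  have h_orbit : LeftInverse h fun n => g^[n] x₀ := fun n => by
    rw [Semiconj.iterate_right (gb := Nat.succ) hcomm n x₀, hx₀, Nat.succ_iterate, zero_add]
  have h_inv : RightInverse h fun n => g^[n] x₀ := fun x => hbij.injective (h_orbit (h x))
  exact Computable.of_rightInverse_of_injective
    (Computable.nat_iterate .id (.const x₀) (hg.comp .snd).to₂) h_orbit.injective h_inv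
end

section
/- Let f : ℕ → ℕ be a computable block function such that the cardinality-of-preimage function cp_f(x) = |f⁻¹(x)| is computable. Then for every x one can compute the f-block containing x: there is a computable function mapping x to (a canonical code of) the finite f-closed interval I that is the f-block containing x. -/
/-- `I` is an interval of `(ℕ, <)`. -/
def IsNatInterval (I : Set ℕ) : Prop :=
  ∀ ⦃a b c : ℕ⦄, a ∈ I → c ∈ I → a ≤ b → b ≤ c → b ∈ I

/-- `I` is `f`-closed: for all `x ∈ I`, `f x ∈ I` and `f ⁻¹ x ⊆ I`. -/
def FClosed (f : ℕ → ℕ) (I : Set ℕ) : Prop :=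
  ∀ x ∈ I, f x ∈ I ∧ ∀ y : ℕ, f y = x → y ∈ I

/-- A finite nonempty interval `I` is an `f`-block if it is `f`-closed, it cannot be
written as a disjoint union of several nonempty `f`-closed intervals, and the set of
elements below `I` is `f`-closed. -/
def IsFBlock (f : ℕ → ℕ) (I : Finset ℕ) : Prop :=
  I.Nonempty ∧ IsNatInterval ↑I ∧ FClosed f ↑I ∧
    (¬ ∃ J K : Set ℕ, J.Nonempty ∧ K.Nonempty ∧ IsNatInterval J ∧ IsNatInterval K ∧
        FClosed f J ∧ FClosed f K ∧ Disjoint J K ∧ J ∪ K = ↑I) ∧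
    FClosed f {x : ℕ | ∀ y ∈ I, x < y}

/-- `f` is a block function if every natural number lies in some `f`-block. -/
def BlockFunction (f : ℕ → ℕ) : Prop :=
  ∀ a : ℕ, ∃ I : Finset ℕ, a ∈ I ∧ IsFBlock f I

/-!
Call `c` a cut of `f` when the initial segment `[0, c)` is `f`-closed. The `f`-blocks are the
intervals `[a, b)` between consecutive cuts: such an interval is `f`-closed, and splitting it into
two `f`-closed intervals would produce a cut strictly between `a` and `b`. Hence the block of `x`
is `[a, b)` with `a` the largest cut `≤ x` and `b` the least cut `> x`, which exists because `x`
lies in some block. Both are found by search, since cuts are decidable from `f` and `cp_f`: once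
`f` maps `[0, c)` into itself, `[0, c) ⊆ f⁻¹[0, c)`, and the two sets are equal iff
`∑_{y < c} cp_f(y) = c`.
-/

open Finset

theorem FClosed.union {f : ℕ → ℕ} {J K : Set ℕ} (hJ : FClosed f J) (hK : FClosed f K) :
    FClosed f (J ∪ K) := by
  rintro x (hx | hx)
  · exact ⟨.inl (hJ x hx).1, fun y hy => .inl ((hJ x hx).2 y hy)⟩
  · exact ⟨.inr (hK x hx).1, fun y hy => .inr ((hK x hx).2 y hy)⟩

def IsCut (f : ℕ → ℕ) (c : ℕ) : Prop :=
  FClosed f (Set.Iio c)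

theorem isCut_iff {f : ℕ → ℕ} {c : ℕ} :
    IsCut f c ↔ (∀ y < c, f y < c) ∧ ∀ z, f z < c → z < c := by
  simp only [IsCut, FClosed, Set.mem_Iio]
  exact ⟨fun h => ⟨fun y hy => (h y hy).1, fun z hz => (h _ hz).2 z rfl⟩,
    fun h y hy => ⟨h.1 y hy, fun z hz => h.2 z (hz ▸ hy)⟩⟩

theorem isCut_zero (f : ℕ → ℕ) : IsCut f 0 := by
  simp [isCut_iff]

theorem IsCut.fClosed_Ico {f : ℕ → ℕ} {a b : ℕ} (ha : IsCut f a) (hb : IsCut f b) :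
    FClosed f (Set.Ico a b) := by
  rw [isCut_iff] at ha hb
  rintro x ⟨hax, hxb⟩
  refine ⟨⟨not_lt.1 fun h => ?_, hb.1 x hxb⟩,
    fun y hy => ⟨not_lt.1 fun h => ?_, hb.2 y (hy ▸ hxb)⟩⟩
  · exact absurd (ha.2 x h) (not_lt.2 hax)
  · exact absurd (hy ▸ ha.1 y h) (not_lt.2 hax)

theorem IsFBlock.isCut_max'_add_one {f : ℕ → ℕ} {I : Finset ℕ} (hI : IsFBlock f I) :
    IsCut f (I.max' hI.1 + 1) := by
  obtain ⟨hne, hint, hcl, -, hbelow⟩ := hI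
  have hsplit : Set.Iio (I.max' hne + 1) = {x | ∀ y ∈ I, x < y} ∪ ↑I := by
    ext z
    simp only [Set.mem_Iio, Set.mem_union, Set.mem_ofPred_eq, mem_coe, Nat.lt_add_one_iff]
    constructor
    · intro hz
      by_cases hlow : ∃ y ∈ I, y ≤ z
      · obtain ⟨y, hyI, hyz⟩ := hlow
        exact .inr (hint hyI (I.max'_mem hne) hyz hz)
      · exact .inl fun y hy => not_le.1 fun h => hlow ⟨y, hy, h⟩
    · rintro (hz | hz)
      · exact (hz _ (I.max'_mem hne)).le
      · exact I.le_max' z hz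
  rw [IsCut, hsplit]
  exact hbelow.union hcl

theorem BlockFunction.finite_preimage_singleton {f : ℕ → ℕ} (hbf : BlockFunction f) (y : ℕ) :
    (f ⁻¹' {y}).Finite := by
  obtain ⟨I, hyI, -, -, hcl, -⟩ := hbf y
  exact I.finite_toSet.subset fun z hz => (hcl y hyI).2 z hz

theorem BlockFunction.exists_isCut_gt {f : ℕ → ℕ} (hbf : BlockFunction f) (x : ℕ) :
    ∃ c, x < c ∧ IsCut f c := by
  obtain ⟨I, hxI, hI⟩ := hbf x
  exact ⟨_, Nat.lt_add_one_iff.2 (I.le_max' x hxI), hI.isCut_max'_add_one⟩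

theorem exists_isCut_of_union_eq_Ico {f : ℕ → ℕ} {a b : ℕ} {J K : Set ℕ} (ha : IsCut f a)
    (haJ : a ∈ J) (hK : K.Nonempty) (hJ : IsNatInterval J) (hJf : FClosed f J)
    (hJK : Disjoint J K) (hunion : J ∪ K = Set.Ico a b) : ∃ c, a < c ∧ c < b ∧ IsCut f c := by
  have hcK : sInf K ∈ K := Nat.sInf_mem hK
  obtain ⟨hac, hcb⟩ : sInf K ∈ Set.Ico a b := hunion ▸ .inr hcK
  have hlt : a < sInf K := hac.lt_of_ne fun h => hJK.ne_of_mem haJ hcK h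
  refine ⟨sInf K, hlt, hcb, ?_⟩
  have hsplit : Set.Iio (sInf K) = Set.Iio a ∪ J := by
    ext z
    simp only [Set.mem_Iio, Set.mem_union]
    constructor
    · intro hz
      refine (lt_or_ge z a).imp_right fun haz => ?_
      have : z ∈ J ∪ K := hunion ▸ ⟨haz, hz.trans hcb⟩
      exact this.resolve_right fun hzK => (Nat.sInf_le hzK).not_gt hz
    · rintro (hz | hz)
      · exact hz.trans hlt
      · exact not_le.1 fun h => hJK.ne_of_mem (hJ haJ hz hac h) hcK rfl
  rw [IsCut, hsplit]
  exact ha.union hJf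

theorem isFBlock_Ico {f : ℕ → ℕ} {a b : ℕ} (hab : a < b) (ha : IsCut f a) (hb : IsCut f b)
    (hno : ∀ c, a < c → c < b → ¬IsCut f c) : IsFBlock f (Ico a b) := by
  refine ⟨nonempty_Ico.2 hab, ?_, ?_, ?_, ?_⟩
  · intro x y z hx hz hxy hyz
    simp only [coe_Ico, Set.mem_Ico] at *
    omega
  · rw [coe_Ico]
    exact ha.fClosed_Ico hb
  · rintro ⟨J, K, hJ, hK, hJi, hKi, hJf, hKf, hJK, hunion⟩
    rw [coe_Ico] at hunion
    have haJK : a ∈ J ∪ K := hunion ▸ ⟨le_rfl, hab⟩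
    obtain ⟨c, hac, hcb, hc⟩ := haJK.elim
      (fun haJ => exists_isCut_of_union_eq_Ico ha haJ hK hJi hJf hJK hunion)
      (fun haK => exists_isCut_of_union_eq_Ico ha haK hJ hKi hKf hJK.symm
        (Set.union_comm K J ▸ hunion))
    exact hno c hac hcb hc
  · have hbelow : {x : ℕ | ∀ y ∈ Ico a b, x < y} = Set.Iio a := by
      ext x
      simp only [Set.mem_ofPred_eq, mem_Ico, Set.mem_Iio]
      exact ⟨fun h => h a ⟨le_rfl, hab⟩, fun h y hy => h.trans_le hy.1⟩
    rw [hbelow]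
    exact ha

theorem isCut_iff_sup_le_and_sum_card_preimage_eq {f : ℕ → ℕ}
    (hfin : ∀ y, (f ⁻¹' {y}).Finite) (c : ℕ) :
    IsCut f c ↔
      (range c).sup (fun y => f y + 1) ≤ c ∧ ∑ y ∈ range c, Nat.card (f ⁻¹' {y}) = c := by
  classical
  set T := (range c).biUnion fun y => (hfin y).toFinset
  have hmem : ∀ z, z ∈ T ↔ f z < c := by simp [T]
  have hcard : #T = ∑ y ∈ range c, Nat.card (f ⁻¹' {y}) := by
    rw [card_biUnion]
    · exact sum_congr rfl fun y _ => (Nat.card_eq_card_finite_toFinset _).symm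
    · intro y _ y' _ hne
      simp only [Function.onFun, disjoint_left, Set.Finite.mem_toFinset, Set.mem_preimage,
        Set.mem_singleton_iff]
      exact fun z hz hz' => hne (hz ▸ hz')
  rw [isCut_iff, ← hcard, Finset.sup_le_iff]
  simp only [mem_range, Nat.add_one_le_iff]
  refine and_congr_right fun hmaps => ?_
  have hsub : range c ⊆ T := fun y hy => (hmem y).2 (hmaps y (mem_range.1 hy))
  constructor
  · intro hpre
    have hT : T = range c :=
      Subset.antisymm (fun z hz => mem_range.2 (hpre z ((hmem z).1 hz))) hsub
    rw [hT, card_range]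
  · intro hcardT z hz
    have hT : range c = T := eq_of_subset_of_card_le hsub (by rw [hcardT, card_range])
    exact mem_range.1 (hT ▸ (hmem z).2 hz)

theorem Computable.finset_sum_range {g : ℕ → ℕ} (hg : Computable g) :
    Computable fun n => ∑ i ∈ range n, g i :=
  (Computable.nat_rec .id (.const 0)
    (Primrec.nat_add.to_comp.comp (Computable.snd.comp .snd)
      (hg.comp (Computable.fst.comp .snd))).to₂).of_eq
    fun n => by induction n <;> simp_all [sum_range_succ]

theorem Computable.finset_sup_range {g : ℕ → ℕ} (hg : Computable g) :
    Computable fun n => (range n).sup g :=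
  (Computable.nat_rec .id (.const 0)
    (Primrec.nat_max.to_comp.comp (Computable.snd.comp .snd)
      (hg.comp (Computable.fst.comp .snd))).to₂).of_eq
    fun n => by induction n <;> simp_all [range_add_one, max_comm]

theorem Computable.nat_findGreatest {p : ℕ → Prop} [DecidablePred p] (hp : ComputablePred p) :
    Computable (Nat.findGreatest p) :=
  (Computable.nat_rec .id (.const 0)
    ((hp.decide.comp (Computable.succ.comp (Computable.fst.comp .snd))).cond
      (Computable.succ.comp (Computable.fst.comp .snd)) (Computable.snd.comp .snd)).to₂).of_eq
    fun n => by induction n <;> simp_all [Nat.findGreatest_succ]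

theorem computablePred_isCut {f : ℕ → ℕ} (hf : Computable f)
    (hcp : Computable fun x : ℕ => Nat.card (f ⁻¹' {x} : Set ℕ))
    (hfin : ∀ y, (f ⁻¹' {y}).Finite) : ComputablePred (IsCut f) := by
  have hsup := Computable.finset_sup_range (Computable.succ.comp hf)
  have hsum := Computable.finset_sum_range hcp
  refine ComputablePred.computable_iff.2 ⟨_, Primrec.and.to_comp.comp
    (Primrec.nat_le.decide.to_comp.comp hsup .id) (Primrec.eq.decide.to_comp.comp hsum .id),
    funext fun c => propext ?_⟩
  rw [isCut_iff_sup_le_and_sum_card_preimage_eq hfin, Bool.and_eq_true, decide_eq_true_iff,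
    decide_eq_true_iff]
  rfl

theorem Primrec.list_range' : Primrec₂ fun s n : ℕ => List.range' s n :=
  (Primrec.list_map (Primrec.list_range.comp .snd)
    (Primrec.nat_add.comp (Primrec.fst.comp .fst) .snd).to₂).of_eq
    fun p => (List.range'_eq_map_range (s := p.1) (n := p.2)).symm

theorem BlockFunction.isFBlock_Ico_findGreatest_find {f : ℕ → ℕ} (hbf : BlockFunction f)
    [DecidablePred (IsCut f)] (x : ℕ) :
    IsFBlock f (Ico (Nat.findGreatest (IsCut f) x) (Nat.find (hbf.exists_isCut_gt x))) := by
  have hlo := Nat.findGreatest_le (P := IsCut f) x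
  obtain ⟨hhi, hhi_cut⟩ := Nat.find_spec (hbf.exists_isCut_gt x)
  refine isFBlock_Ico (hlo.trans_lt hhi) (Nat.findGreatest_spec (Nat.zero_le x) (isCut_zero f))
    hhi_cut fun c hlo_c hc_hi hc => ?_
  rcases le_or_gt c x with hcx | hxc
  · exact (Nat.le_findGreatest hcx hc).not_gt hlo_c
  · exact (Nat.find_min' _ ⟨hxc, hc⟩).not_gt hc_hi

/-- For a computable block function `f` whose cardinality-of-preimage function
`cp_f (x) = card (f⁻¹ x)` is computable, one can compute, uniformly in `x`, (a code of)
the `f`-block containing `x`, given here as a list of its elements. -/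
theorem stmt_15 (f : ℕ → ℕ) (hf : Computable f) (hbf : BlockFunction f)
    (hcp : Computable fun x : ℕ => Nat.card (f ⁻¹' {x} : Set ℕ)) :
    ∃ B : ℕ → List ℕ, Computable B ∧ ∀ x : ℕ, x ∈ B x ∧ IsFBlock f (B x).toFinset := by
  classical
  have hcut := computablePred_isCut hf hcp hbf.finite_preimage_singleton
  have hgt : ComputablePred fun p : ℕ × ℕ => p.1 < p.2 ∧ IsCut f p.2 :=
    Computable.computablePred ((Primrec.and.to_comp.comp Primrec.nat_lt.decide.to_comp
      (hcut.decide.comp .snd)).of_eq fun p => by simp)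
  set lo := Nat.findGreatest (IsCut f)
  set hi := fun x => Nat.find (hbf.exists_isCut_gt x)
  have hlo_le_hi (x : ℕ) : lo x ≤ hi x :=
    (Nat.findGreatest_le x).trans (Nat.find_spec (hbf.exists_isCut_gt x)).1.le
  refine ⟨fun x => List.range' (lo x) (hi x - lo x), Primrec.list_range'.to_comp.comp
    (Computable.nat_findGreatest hcut) (Primrec.nat_sub.to_comp.comp (Computable.find hgt _)
      (Computable.nat_findGreatest hcut)), fun x => ⟨?_, ?_⟩⟩
  · rw [List.mem_range'_1, Nat.add_sub_cancel' (hlo_le_hi x)]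
    exact ⟨Nat.findGreatest_le x, (Nat.find_spec (hbf.exists_isCut_gt x)).1⟩
  · rw [List.toFinset_range'_1, Nat.add_sub_cancel' (hlo_le_hi x)]
    exact hbf.isFBlock_Ico_findGreatest_find x
end

section
/- A block function f : ℕ → ℕ that is not almost identity satisfies at least one of: (a) there are infinitely many u such that u is the least element of its f-block and f(u) > u; (b) there are infinitely many pairs (u, v) with u < v lying in the same f-block, u the least element of that block, and f(v) = u. -/
/-! A block whose least element `u` is fixed by `f` and is the image of no larger element of
the block splits as `{u}` together with the rest of the block, both `f`-closed intervals; by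
indecomposability the block is then `{u}`. So every non-fixed point lies in a block whose
least element `u` either satisfies `u < f u` or is `f v` for some larger `v` of the block.
A block is determined by its least element: of two blocks with the same least element, the
one with the smaller maximum is an `f`-closed initial segment of the other. So if both
alternatives held for only finitely many `u`, the non-fixed points would lie in finitely many
finite blocks. -/

open Set

lemma isNatInterval_iff_ordConnected {I : Set ℕ} : IsNatInterval I ↔ I.OrdConnected :=
  ⟨fun h => ⟨fun _ ha _ hc _ hb => h ha hc hb.1 hb.2⟩,
   fun h _ _ _ ha hc hab hbc => h.out ha hc ⟨hab, hbc⟩⟩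

lemma FClosed.diff {f : ℕ → ℕ} {I J : Set ℕ} (hI : FClosed f I) (hJ : FClosed f J) :
    FClosed f (I \ J) := fun x hx =>
  ⟨⟨(hI x hx.1).1, fun hfx => hx.2 ((hJ (f x) hfx).2 x rfl)⟩,
   fun y hy => ⟨(hI x hx.1).2 y hy, fun hyJ => hx.2 (hy ▸ (hJ y hyJ).1)⟩⟩

namespace IsFBlock

variable {f : ℕ → ℕ} {I : Finset ℕ}

lemma ordConnected (hI : IsFBlock f I) : (I : Set ℕ).OrdConnected :=
  isNatInterval_iff_ordConnected.1 hI.2.1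

lemma subset_of_isLowerSet (hI : IsFBlock f I) {J : Set ℕ} (hJ : IsLowerSet J)
    (hIJ : FClosed f (↑I ∩ J)) (hne : (↑I ∩ J).Nonempty) : ↑I ⊆ J := by
  by_contra hsub
  have hdiff : ↑I \ J = ↑I ∩ Jᶜ := rfl
  apply hI.2.2.2.1
  refine ⟨↑I ∩ J, ↑I \ J, hne, sdiff_nonempty.2 hsub, ?_, ?_, hIJ,
    sdiff_self_inter ▸ hI.2.2.1.diff hIJ, ?_, ?_⟩
  · exact isNatInterval_iff_ordConnected.2 (hI.ordConnected.inter hJ.ordConnected)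
  · rw [hdiff]
    exact isNatInterval_iff_ordConnected.2
      (hI.ordConnected.inter (isUpperSet_compl.2 hJ).ordConnected)
  · exact disjoint_sdiff_right.mono_left inter_subset_right
  · exact inter_union_sdiff _ _

lemma subset_of_isLeast_of_max'_le {I' : Finset ℕ} (hI : IsFBlock f I) (hI' : IsFBlock f I')
    {u : ℕ} (hu : IsLeast (↑I) u) (hu' : IsLeast (↑I') u) (hmax : I.max' hI.1 ≤ I'.max' hI'.1) :
    I' ⊆ I := by
  have hcut : ↑I' ∩ Iic (I.max' hI.1) = (I : Set ℕ) := by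
    ext x
    constructor
    · rintro ⟨hx, hxm⟩
      exact hI.ordConnected.out hu.1 (I.max'_mem hI.1) ⟨hu'.2 hx, hxm⟩
    · intro hx
      exact ⟨hI'.ordConnected.out hu'.1 (I'.max'_mem hI'.1)
        ⟨hu.2 hx, (I.le_max' x hx).trans hmax⟩, I.le_max' x hx⟩
  have hsub := hI'.subset_of_isLowerSet (isLowerSet_Iic _) (by rw [hcut]; exact hI.2.2.1)
    (by rw [hcut]; exact ⟨u, hu.1⟩)
  rw [← Finset.coe_subset, ← hcut]
  exact subset_inter_iff.2 ⟨Subset.rfl, hsub⟩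

lemma eq_of_isLeast {I' : Finset ℕ} (hI : IsFBlock f I) (hI' : IsFBlock f I') {u : ℕ}
    (hu : IsLeast (↑I) u) (hu' : IsLeast (↑I') u) : I = I' := by
  wlog hmax : I.max' hI.1 ≤ I'.max' hI'.1 generalizing I I'
  · exact (this hI' hI hu' hu (le_of_not_ge hmax)).symm
  have hsub := subset_of_isLeast_of_max'_le hI hI' hu hu' hmax
  exact (subset_of_isLeast_of_max'_le hI' hI hu' hu (Finset.max'_subset hI'.1 hsub)).antisymm hsub

lemma eq_singleton_of_isLeast (hI : IsFBlock f I) {u : ℕ} (hu : IsLeast (↑I) u)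
    (hfu_le : f u ≤ u) (hpre : ∀ v ∈ I, u < v → f v ≠ u) : I = {u} := by
  have hfu : f u = u := le_antisymm hfu_le (hu.2 (hI.2.2.1 u hu.1).1)
  have hcut : ↑I ∩ Iic u = ({u} : Set ℕ) :=
    Subset.antisymm (fun x hx => le_antisymm hx.2 (hu.2 hx.1)) (by simpa using hu.1)
  have hclosed : FClosed f {u} := by
    rintro x rfl
    refine ⟨hfu, fun y hy => ?_⟩
    have hyI : y ∈ I := (hI.2.2.1 x hu.1).2 y hy
    by_contra hyx
    exact hpre y hyI (lt_of_le_of_ne (hu.2 hyI) (Ne.symm hyx)) hy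
  have hsub := hI.subset_of_isLowerSet (isLowerSet_Iic u) (by rwa [hcut])
    (by rw [hcut]; exact singleton_nonempty u)
  rw [← Finset.coe_eq_singleton, ← hcut]
  exact (inter_eq_left.2 hsub).symm

end IsFBlock

lemma BlockFunction.exists_block_of_ne {f : ℕ → ℕ} (hbf : BlockFunction f) {x : ℕ}
    (hx : f x ≠ x) : ∃ I : Finset ℕ, ∃ u, IsFBlock f I ∧ IsLeast (↑I) u ∧ x ∈ I ∧
      (u < f u ∨ ∃ v ∈ I, u < v ∧ f v = u) := by
  obtain ⟨I, hxI, hI⟩ := hbf x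
  have hu := I.isLeast_min' hI.1
  refine ⟨I, _, hI, hu, hxI, ?_⟩
  by_contra! h
  have hsingle := hI.eq_singleton_of_isLeast hu h.1 h.2
  have hfxI : f x ∈ I := (hI.2.2.1 x hxI).1
  rw [hsingle, Finset.mem_singleton] at hxI hfxI
  exact hx (hfxI.trans hxI.symm)

/-- A block function that is not almost identity satisfies (a) or (b): (a) infinitely
many `u` are the least element of their `f`-block and satisfy `f u > u`; (b) there are
infinitely many pairs `(u, v)` in a common `f`-block with `u` its least element,
`u < v` and `f v = u`. -/
theorem stmt_17 (f : ℕ → ℕ) (hbf : BlockFunction f)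
    (hni : ¬ {x : ℕ | f x ≠ x}.Finite) :
    {u : ℕ | (∃ I : Finset ℕ, IsFBlock f I ∧ u ∈ I ∧ ∀ y ∈ I, u ≤ y) ∧ u < f u}.Infinite ∨
      {p : ℕ × ℕ | ∃ I : Finset ℕ, IsFBlock f I ∧ p.1 ∈ I ∧ p.2 ∈ I ∧
        (∀ y ∈ I, p.1 ≤ y) ∧ p.1 < p.2 ∧ f p.2 = p.1}.Infinite := by
  by_contra! ⟨hA, hB⟩
  have hblocks : ∀ u, {I : Finset ℕ | IsFBlock f I ∧ IsLeast (↑I) u}.Finite := fun u =>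
    Set.Subsingleton.finite fun _ hI _ hI' =>
      IsFBlock.eq_of_isLeast (u := u) hI.1 hI'.1 hI.2 hI'.2
  apply hni
  refine ((hA.union (hB.image Prod.fst)).biUnion fun u _ =>
    (hblocks u).biUnion fun I _ => I.finite_toSet).subset ?_
  intro x hx
  obtain ⟨I, u, hI, hu, hxI, hcase⟩ := hbf.exists_block_of_ne hx
  refine mem_biUnion (x := u) ?_ (mem_biUnion (x := I) ⟨hI, hu⟩ hxI)
  rcases hcase with hfu | ⟨v, hvI, huv, hfv⟩
  · exact Or.inl ⟨⟨I, hI, hu.1, hu.2⟩, hfu⟩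
  · exact Or.inr ⟨(u, v), ⟨I, hI, hu.1, hvI, hu.2, huv, hfv⟩, rfl⟩
end
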